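/- arXiv:1507.02103 — 2 statements merged into one kernel-verified Lean document; each statement's English description precedes it below -/
import Mathlib

section
/- Flatness preservation: for every network on n nodes and every fixed parameter ε > 0, the generalized degree is constant across nodes (x_i(ε) = x_j(ε) for all i, j ∈ N) if and only if the network is regular (d_i = d_j for all i, j ∈ N). Moreover, in a regular network x_i(ε) = d_i for all i ∈ N. -/
open Matrix Filter

/-- A network on `n` nodes: a symmetric, loopless 0-1 adjacency matrix. -/
def IsNetwork {n : ℕ} (A : Matrix (Fin n) (Fin n) ℝ) : Prop :=
  (∀ i j, A i j = A j i) ∧ (∀ i, A i i = 0) ∧ (∀ i j, A i j = 0 ∨ A i j = 1)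

/-- Degree of node `i`: the `i`-th entry of `A · e`. -/
def deg {n : ℕ} (A : Matrix (Fin n) (Fin n) ℝ) (i : Fin n) : ℝ :=
  ∑ j, A i j

/-- The Laplacian matrix of the network: `ℓ_{ii} = d_i`, `ℓ_{ij} = -a_{ij}` for `i ≠ j`. -/
def lap {n : ℕ} (A : Matrix (Fin n) (Fin n) ℝ) : Matrix (Fin n) (Fin n) ℝ :=
  Matrix.diagonal (deg A) - A

lemma lap_mulVec {n : ℕ} (A : Matrix (Fin n) (Fin n) ℝ) (y : Fin n → ℝ) (i : Fin n) :
    (lap A).mulVec y i = deg A i * y i - ∑ j, A i j * y j := by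
  rw [lap, Matrix.sub_mulVec, Pi.sub_apply, Matrix.mulVec_diagonal]
  simp [Matrix.mulVec, dotProduct]

lemma quad_nonneg {n : ℕ} (A : Matrix (Fin n) (Fin n) ℝ) (hA : IsNetwork A)
    (y : Fin n → ℝ) : 0 ≤ ∑ i, y i * (lap A).mulVec y i := by
  have hQ : ∑ i, y i * (lap A).mulVec y i
      = ∑ i, ∑ j, A i j * (y i ^ 2 - y i * y j) := by
    refine Finset.sum_congr rfl fun i _ => ?_
    rw [lap_mulVec, deg]
    have h1 : y i * ((∑ j, A i j) * y i) = ∑ j, A i j * y i ^ 2 := by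
      rw [Finset.sum_mul, Finset.mul_sum]
      exact Finset.sum_congr rfl fun j _ => by ring
    have h2' : y i * ∑ j, A i j * y j = ∑ j, A i j * (y i * y j) := by
      rw [Finset.mul_sum]
      exact Finset.sum_congr rfl fun j _ => by ring
    rw [mul_sub, h1, h2', ← Finset.sum_sub_distrib]
    exact Finset.sum_congr rfl fun j _ => by ring
  have hswap : ∑ i, ∑ j, A i j * (y i ^ 2 - y i * y j)
      = ∑ i, ∑ j, A j i * (y j ^ 2 - y j * y i) := by rw [Finset.sum_comm]
  have h2 : 2 * ∑ i, y i * (lap A).mulVec y i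
      = ∑ i, ∑ j, A i j * (y i - y j) ^ 2 := by
    rw [two_mul, hQ]
    nth_rewrite 2 [hswap]
    rw [← Finset.sum_add_distrib]
    refine Finset.sum_congr rfl fun i _ => ?_
    rw [← Finset.sum_add_distrib]
    refine Finset.sum_congr rfl fun j _ => ?_
    rw [hA.1 j i]; ring
  have hS : 0 ≤ ∑ i, ∑ j, A i j * (y i - y j) ^ 2 :=
    Finset.sum_nonneg fun i _ => Finset.sum_nonneg fun j _ =>
      mul_nonneg (by rcases hA.2.2 i j with h | h <;> rw [h] <;> norm_num)
        (sq_nonneg (y i - y j))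
  linarith

/-- Flatness preservation: the generalized degree is constant across nodes iff the
network is regular; moreover in a regular network the generalized degree equals degree. -/
theorem generalizedDegree_flatness_preservation
    {n : ℕ} (A : Matrix (Fin n) (Fin n) ℝ) (hA : IsNetwork A)
    (ε : ℝ) (hε : 0 < ε) (x : Fin n → ℝ)
    (hx : ((1 : Matrix (Fin n) (Fin n) ℝ) + ε • lap A).mulVec x = deg A) :
    ((∀ i j : Fin n, x i = x j) ↔ (∀ i j : Fin n, deg A i = deg A j)) ∧
      ((∀ i j : Fin n, deg A i = deg A j) → ∀ i : Fin n, x i = deg A i) := by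
  have hxi : ∀ i, x i + ε * (lap A).mulVec x i = deg A i := by
    intro i
    have := congrFun hx i
    simpa [Matrix.add_mulVec, Matrix.one_mulVec, Matrix.smul_mulVec] using this
  have key : (∀ i j : Fin n, deg A i = deg A j) → ∀ i : Fin n, x i = deg A i := by
    intro hd
    set y : Fin n → ℝ := fun i => x i - deg A i with hy
    have hLd : ∀ i, (lap A).mulVec (deg A) i = 0 := by
      intro i
      rw [lap_mulVec]
      have : ∑ j, A i j * deg A j = ∑ j, A i j * deg A i :=
        Finset.sum_congr rfl fun j _ => by rw [hd j i]
      rw [this, ← Finset.sum_mul]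
      simp [deg, mul_comm]
    have hLy : ∀ i, (lap A).mulVec y i = (lap A).mulVec x i := by
      intro i
      have h : (lap A).mulVec y = (lap A).mulVec x - (lap A).mulVec (deg A) := by
        rw [← Matrix.mulVec_sub]; rfl
      rw [h]; simp [hLd i]
    have hyeq : ∀ i, y i + ε * (lap A).mulVec y i = 0 := by
      intro i
      rw [hLy i]
      have := hxi i
      simp only [hy]
      linarith
    have hsum : ∑ i, (y i * y i + ε * (y i * (lap A).mulVec y i)) = 0 :=
      Finset.sum_eq_zero fun i _ => by
        calc y i * y i + ε * (y i * (lap A).mulVec y i)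
            = y i * (y i + ε * (lap A).mulVec y i) := by ring
          _ = 0 := by rw [hyeq i, mul_zero]
    have hq := quad_nonneg A hA y
    have hsum2 : ∑ i, y i * y i + ε * ∑ i, y i * (lap A).mulVec y i = 0 := by
      rw [← hsum, Finset.sum_add_distrib, Finset.mul_sum]
    have hyz : ∑ i, y i * y i = 0 := by
      have h1 : (0:ℝ) ≤ ∑ i, y i * y i :=
        Finset.sum_nonneg fun i _ => mul_self_nonneg _
      nlinarith
    intro i
    have hzi : y i = 0 :=
      mul_self_eq_zero.mp <|
        (Finset.sum_eq_zero_iff_of_nonneg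
          (fun i _ => mul_self_nonneg (y i))).mp hyz i (Finset.mem_univ i)
    have : x i - deg A i = 0 := hzi
    linarith
  refine ⟨⟨fun hc i j => ?_, fun hd i j => by rw [key hd i, key hd j, hd i j]⟩, key⟩
  have hL : ∀ i, (lap A).mulVec x i = 0 := by
    intro i
    rw [lap_mulVec]
    have : ∑ k, A i k * x k = ∑ k, A i k * x i :=
      Finset.sum_congr rfl fun k _ => by rw [hc k i]
    rw [this, ← Finset.sum_mul]
    simp [deg, mul_comm]
  have hi := hxi i; have hj := hxi j
  rw [hL i] at hi; rw [hL j] at hj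
  have hcij := hc i j
  linarith
end

section
/- Iterative computation of generalized degree: let (N,A) be a network on n ≥ 1 nodes with maximal degree 𝔡 = max{d_i : i ∈ N}, let C = 𝔡·I − L, and for ε > 0 let β = ε/(1 + ε𝔡). Define the sequence of vectors x(ε)^(0) = (1 − β𝔡)·d and x(ε)^(k) = x(ε)^(k−1) + (1 − β𝔡)·(βC)^k·d for k = 1, 2, …. Then lim_{k → ∞} x(ε)^(k) = x(ε) (componentwise). -/
open Matrix Filter

/-!
With `D` the maximal degree, `C = D • 1 - L` is entrywise nonnegative with all row sums `D`, so
the ℓ∞ operator norm of `β • C` is at most `β * D < 1`. Since `β * (1 + ε * D) = ε`, we have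
`1 + ε • L = (1 + ε * D) • (1 - β • C)` and `(1 - β * D) * (1 + ε * D) = 1`, hence
`(1 - β • C) *ᵥ x = (1 - β * D) • d`. The iterates `X k` are the partial Neumann sums
`∑ i < k + 1, (β • C) ^ i` applied to `(1 - β * D) • d`, which converge to `x`.
-/

section LinftyOpNorm

attribute [local instance] Matrix.linftyOpNormedAddCommGroup Matrix.linftyOpNormedRing

variable {m n : Type*} [Fintype m] [Fintype n]

theorem Matrix.linfty_opNorm_le_of_nonneg {M : Matrix m n ℝ} {r : ℝ} (hr : 0 ≤ r)
    (hM : ∀ i j, 0 ≤ M i j) (hrow : ∀ i, ∑ j, M i j ≤ r) : ‖M‖ ≤ r := by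
  lift r to NNReal using hr
  rw [linfty_opNorm_def, NNReal.coe_le_coe]
  refine Finset.sup_le fun i _ => ?_
  rw [← NNReal.coe_le_coe]
  push_cast
  simpa only [Real.norm_of_nonneg (hM i _)] using hrow i

variable [DecidableEq m]

theorem Matrix.tendsto_geom_sum_mulVec {M : Matrix m m ℝ} (hM : ‖M‖ < 1) {x v : m → ℝ}
    (hx : (1 - M) *ᵥ x = v) :
    Tendsto (fun k => (∑ i ∈ Finset.range k, M ^ i) *ᵥ v) atTop (nhds x) := by
  have hpartial : ∀ k, (∑ i ∈ Finset.range k, M ^ i) *ᵥ v = x - M ^ k *ᵥ x := fun k => by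
    rw [← hx, mulVec_mulVec, geom_sum_mul_neg, sub_mulVec, one_mulVec]
  have hbound : Tendsto (fun k => ‖M ^ k‖ * ‖x‖) atTop (nhds 0) := by
    simpa using (tendsto_pow_atTop_nhds_zero_of_norm_lt_one hM).norm.mul_const ‖x‖
  have hpow : Tendsto (fun k => M ^ k *ᵥ x) atTop (nhds 0) :=
    squeeze_zero_norm (fun k => linfty_opNorm_mulVec _ _) hbound
  simpa only [hpartial, sub_zero] using tendsto_const_nhds.sub hpow

theorem Matrix.tendsto_geom_sum_mulVec_of_nonneg {M : Matrix m m ℝ} {r : ℝ} (hr₀ : 0 ≤ r)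
    (hr₁ : r < 1) (hM : ∀ i j, 0 ≤ M i j) (hrow : ∀ i, ∑ j, M i j ≤ r) {x v : m → ℝ}
    (hx : (1 - M) *ᵥ x = v) :
    Tendsto (fun k => (∑ i ∈ Finset.range k, M ^ i) *ᵥ v) atTop (nhds x) :=
  tendsto_geom_sum_mulVec ((linfty_opNorm_le_of_nonneg hr₀ hM hrow).trans_lt hr₁) hx

end LinftyOpNorm

theorem Matrix.eq_smul_geom_sum_mulVec {m R : Type*} [Fintype m] [DecidableEq m] [CommSemiring R]
    {M : Matrix m m R} {c : R} {v : m → R} {X : ℕ → m → R} (h₀ : X 0 = c • v)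
    (hsucc : ∀ k, X (k + 1) = X k + c • (M ^ (k + 1)) *ᵥ v) (k : ℕ) :
    X k = (∑ i ∈ Finset.range (k + 1), M ^ i) *ᵥ (c • v) := by
  induction k with
  | zero => simpa using h₀
  | succ k ih =>
    rw [hsucc, ih, Finset.sum_range_succ _ (k + 1), add_mulVec, mulVec_smul, mulVec_smul]

theorem one_add_smul_eq_smul_one_sub_smul {R : Type*} [Ring R] [Algebra ℝ R] (L : R)
    {ε D β : ℝ} (hβ : β * (1 + ε * D) = ε) :
    1 + ε • L = (1 + ε * D) • (1 - β • (D • 1 - L)) := by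
  linear_combination (norm := module) hβ • (D • 1 - L)

section Laplacian

variable {n : ℕ}

theorem IsNetwork.nonneg {A : Matrix (Fin n) (Fin n) ℝ} (hA : IsNetwork A) (i j : Fin n) :
    0 ≤ A i j := by
  rcases hA.2.2 i j with h | h <;> simp [h]

theorem deg_nonneg {A : Matrix (Fin n) (Fin n) ℝ} (hA : ∀ i j, 0 ≤ A i j) (i : Fin n) :
    0 ≤ deg A i :=
  Finset.sum_nonneg fun j _ => hA i j

theorem sum_lap_apply (A : Matrix (Fin n) (Fin n) ℝ) (i : Fin n) : ∑ j, lap A i j = 0 := by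
  simp [lap, Finset.sum_sub_distrib, diagonal_apply, deg]

theorem sum_smul_one_sub_lap_apply (A : Matrix (Fin n) (Fin n) ℝ) (D : ℝ) (i : Fin n) :
    ∑ j, (D • 1 - lap A) i j = D := by
  simp [Finset.sum_sub_distrib, sum_lap_apply, one_apply]

theorem smul_one_sub_lap_apply_nonneg {A : Matrix (Fin n) (Fin n) ℝ} (hA : ∀ i j, 0 ≤ A i j)
    {D : ℝ} (hD : ∀ i, deg A i ≤ D) (i j : Fin n) : 0 ≤ (D • 1 - lap A) i j := by
  by_cases h : i = j
  · subst h
    simp only [lap, Matrix.sub_apply, Matrix.smul_apply, one_apply_eq, smul_eq_mul, mul_one,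
      diagonal_apply_eq, sub_nonneg, tsub_le_iff_right]
    linarith [hD i, hA i i]
  · simp [lap, h, hA i j]

end Laplacian

theorem generalizedDegree_iterative_general
    {n : ℕ} (A : Matrix (Fin n) (Fin n) ℝ) (hA : IsNetwork A)
    (ε : ℝ) (hε : 0 < ε) (x : Fin n → ℝ)
    (hx : ((1 : Matrix (Fin n) (Fin n) ℝ) + ε • lap A).mulVec x = deg A)
    (D β : ℝ) (hD : D = ⨆ i, deg A i) (hβ : β = ε / (1 + ε * D))
    (C : Matrix (Fin n) (Fin n) ℝ)
    (hC : C = D • (1 : Matrix (Fin n) (Fin n) ℝ) - lap A)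
    (X : ℕ → Fin n → ℝ)
    (hX0 : X 0 = (1 - β * D) • deg A)
    (hXk : ∀ k : ℕ, X (k + 1) =
      X k + (1 - β * D) • ((β • C) ^ (k + 1)).mulVec (deg A)) :
    Filter.Tendsto X Filter.atTop (nhds x) := by
  have hdeg_le : ∀ i, deg A i ≤ D := hD ▸ Finite.le_ciSup (deg A)
  have hD₀ : 0 ≤ D := hD ▸ Real.iSup_nonneg (deg_nonneg hA.nonneg)
  have hden : 0 < 1 + ε * D := by positivity
  have hβ₀ : 0 ≤ β := hβ ▸ by positivity
  have hβε : β * (1 + ε * D) = ε := by rw [hβ, div_mul_cancel₀ _ hden.ne']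
  have hβD : β * D < 1 := by
    rw [hβ, div_mul_eq_mul_div, div_lt_one hden]
    linarith
  have hfixed : (1 - β • C) *ᵥ x = (1 - β * D) • deg A := by
    have hscale : (1 - β * D) * (1 + ε * D) = 1 := by linear_combination -D * hβε
    rw [← hx, one_add_smul_eq_smul_one_sub_smul (lap A) hβε, ← hC, smul_mulVec, smul_smul,
      hscale, one_smul]
  have hβC_nonneg : ∀ i j, 0 ≤ (β • C) i j := fun i j =>
    mul_nonneg hβ₀ (hC ▸ smul_one_sub_lap_apply_nonneg hA.nonneg hdeg_le i j)
  have hβC_row : ∀ i, ∑ j, (β • C) i j ≤ β * D := fun i => le_of_eq <| by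
    simp only [Matrix.smul_apply, smul_eq_mul, ← Finset.mul_sum, hC, sum_smul_one_sub_lap_apply]
  rw [funext (eq_smul_geom_sum_mulVec hX0 hXk)]
  exact (tendsto_geom_sum_mulVec_of_nonneg (by positivity) hβD hβC_nonneg
    hβC_row hfixed).comp (tendsto_add_atTop_nat 1)

/-- Iterative computation of generalized degree: the sequence
`x⁽⁰⁾ = (1 − β𝔡)·d`, `x⁽ᵏ⁾ = x⁽ᵏ⁻¹⁾ + (1 − β𝔡)·(βC)^k·d` converges (componentwise)
to the generalized degree `x(ε)`. -/
theorem generalizedDegree_iterative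
    {n : ℕ} (hn : 0 < n) (A : Matrix (Fin n) (Fin n) ℝ) (hA : IsNetwork A)
    (ε : ℝ) (hε : 0 < ε) (x : Fin n → ℝ)
    (hx : ((1 : Matrix (Fin n) (Fin n) ℝ) + ε • lap A).mulVec x = deg A)
    (D β : ℝ) (hD : D = ⨆ i, deg A i) (hβ : β = ε / (1 + ε * D))
    (C : Matrix (Fin n) (Fin n) ℝ)
    (hC : C = D • (1 : Matrix (Fin n) (Fin n) ℝ) - lap A)
    (X : ℕ → Fin n → ℝ)
    (hX0 : X 0 = (1 - β * D) • deg A)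
    (hXk : ∀ k : ℕ, X (k + 1) =
      X k + (1 - β * D) • ((β • C) ^ (k + 1)).mulVec (deg A)) :
    Filter.Tendsto X Filter.atTop (nhds x) :=
  generalizedDegree_iterative_general A hA ε hε x hx D β hD hβ C hC X hX0 hXk
end
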